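/- Let a ≤ b and a < c ≤ d be positive integers. Then there exists n₀ such that for every n ≥ n₀, ex(n, S_{a,b}, S_{c,d}) = N(S_{a,b}, K_{c,n−c}). -/

import Mathlib

/-!
Copies of `S_{a,b}` are counted through frames `(u, v, A, B)`: an ordered edge `uv` with leaf
sets `A ⊆ N(u) \ {v}` and `B ⊆ N(v) \ {u}`. Every copy has exactly one frame, or two when
`a = b`, so it suffices to compare numbers of frames.

In an `S_{c,d}`-free graph every neighbour of a vertex of degree at least `c + d + 2` has degree
at most `c`. Charging the frames on each edge to its low-degree end, and writing
`w(m) = C(c-1,a) C(m-1,b) + C(m-1,a) C(c-1,b)` for the frames on an edge joining degrees `c`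
and `m`, the number of frames is at most `c D w(D)` if there are at least `c` high-degree
vertices (`D ≤ n - c` being the number of the others), and at most `(c - 1) n w(n) + O(n)`
otherwise. For large `n` both bounds are at most `c (n - c) w(n - c)`, the number of frames of
`K_{c,n-c}`, which is `S_{c,d}`-free.
-/

open SimpleGraph

noncomputable def copyCount {α β : Type*} (H : SimpleGraph α) (G : SimpleGraph β) : ℕ :=
  Set.ncard {G' : G.Subgraph | Nonempty (H ≃g G'.coe)}

def Contains {α β : Type*} (F : SimpleGraph α) (G : SimpleGraph β) : Prop :=
  ∃ f : F →g G, Function.Injective f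

noncomputable def exGen {α β : Type*} (n : ℕ) (H : SimpleGraph α) (F : SimpleGraph β) : ℕ :=
  sSup {N | ∃ G : SimpleGraph (Fin n), ¬ Contains F G ∧ N = copyCount H G}

/-- The double star `S_{a,b}`: central edge `0-1`, vertices `2,…,a+1` are leaves
attached to `0`, and vertices `a+2,…,a+b+1` are leaves attached to `1`. -/
def doubleStar (a b : ℕ) : SimpleGraph (Fin (a + b + 2)) :=
  SimpleGraph.fromRel (fun x y =>
    (x.val = 0 ∧ y.val = 1) ∨ (x.val = 0 ∧ 2 ≤ y.val ∧ y.val < a + 2) ∨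
      (x.val = 1 ∧ a + 2 ≤ y.val))

open Finset
open scoped Classical

namespace doubleStar

variable {a b : ℕ}

def left : Fin (a + b + 2) := 0
def right : Fin (a + b + 2) := 1
def leftLeaf (i : Fin a) : Fin (a + b + 2) := (Fin.castAdd b i).succ.succ
def rightLeaf (j : Fin b) : Fin (a + b + 2) := (Fin.natAdd a j).succ.succ

@[simp] lemma val_left : (left : Fin (a + b + 2)).val = 0 := rfl
@[simp] lemma val_right : (right : Fin (a + b + 2)).val = 1 := rfl
@[simp] lemma val_leftLeaf (i : Fin a) : (leftLeaf (b := b) i).val = i + 2 := rfl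
@[simp] lemma val_rightLeaf (j : Fin b) : (rightLeaf (a := a) j).val = a + j + 2 := rfl

lemma leftLeaf_injective : Function.Injective (leftLeaf (a := a) (b := b)) := fun i j h => by
  simpa [Fin.ext_iff] using h

lemma rightLeaf_injective : Function.Injective (rightLeaf (a := a) (b := b)) := fun i j h => by
  simpa [Fin.ext_iff] using h

lemma mem_image_leftLeaf {x : Fin (a + b + 2)} :
    x ∈ univ.image leftLeaf ↔ 2 ≤ x.val ∧ x.val < a + 2 := by
  simp only [mem_image, mem_univ, true_and, Fin.ext_iff, val_leftLeaf]
  exact ⟨by rintro ⟨i, hi⟩; omega, fun h => ⟨⟨x - 2, by omega⟩, by simp; omega⟩⟩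

lemma mem_image_rightLeaf {x : Fin (a + b + 2)} :
    x ∈ univ.image rightLeaf ↔ a + 2 ≤ x.val := by
  simp only [mem_image, mem_univ, true_and, Fin.ext_iff, val_rightLeaf]
  exact ⟨by rintro ⟨j, hj⟩; omega, fun h => ⟨⟨x - (a + 2), by omega⟩, by simp; omega⟩⟩

end doubleStar

section Frames

variable {V W : Type*}

def starAdj (u v : V) (A B : Finset V) (x y : V) : Prop :=
  (x = u ∧ y = v) ∨ (x = v ∧ y = u) ∨ (x = u ∧ y ∈ A) ∨ (x ∈ A ∧ y = u) ∨
    (x = v ∧ y ∈ B) ∨ (x ∈ B ∧ y = v)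

lemma starAdj.symm {u v : V} {A B : Finset V} {x y : V} (h : starAdj u v A B x y) :
    starAdj u v A B y x := by
  unfold starAdj at *; tauto

lemma starAdj.mem_verts {u v : V} {A B : Finset V} {x y : V} (h : starAdj u v A B x y) :
    x ∈ insert u (insert v (A ∪ B)) := by
  simp only [mem_insert, mem_union]; unfold starAdj at h; tauto

lemma starAdj_image {f : V → W} (hf : Function.Injective f) {u v : V} {A B : Finset V}
    {x y : V} :
    starAdj (f u) (f v) (A.image f) (B.image f) (f x) (f y) ↔ starAdj u v A B x y := by
  simp only [starAdj, hf.eq_iff, hf.mem_finset_image]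

lemma doubleStar_adj_iff {a b : ℕ} {p q : Fin (a + b + 2)} :
    (doubleStar a b).Adj p q ↔ starAdj doubleStar.left doubleStar.right
      (univ.image doubleStar.leftLeaf) (univ.image doubleStar.rightLeaf) p q := by
  simp only [doubleStar, fromRel_adj, starAdj, doubleStar.mem_image_leftLeaf,
    doubleStar.mem_image_rightLeaf, Fin.ext_iff, doubleStar.val_left, doubleStar.val_right, ne_eq]
  omega

lemma exists_injective_image_univ_eq {A : Finset V} {a : ℕ} (hA : #A = a) :
    ∃ e : Fin a → V, Function.Injective e ∧ univ.image e = A := by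
  let σ := A.equivFin.trans (finCongr hA)
  refine ⟨fun i => σ.symm i, Subtype.coe_injective.comp σ.symm.injective, ?_⟩
  ext x
  simp only [mem_image, mem_univ, true_and]
  exact ⟨by rintro ⟨i, rfl⟩; exact (σ.symm i).2, fun hx => ⟨σ ⟨x, hx⟩, by simp⟩⟩

end Frames

section StarFrames

variable {V : Type*} {a b : ℕ}
open doubleStar

def IsStarFrame (a b : ℕ) (u v : V) (A B : Finset V) : Prop :=
  u ≠ v ∧ u ∉ A ∪ B ∧ v ∉ A ∪ B ∧ Disjoint A B ∧ #A = a ∧ #B = b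

lemma IsStarFrame.image {W : Type*} {f : V → W} (hf : Function.Injective f) {u v : V}
    {A B : Finset V} (h : IsStarFrame a b u v A B) :
    IsStarFrame a b (f u) (f v) (A.image f) (B.image f) := by
  obtain ⟨huv, hu, hv, hAB, hA, hB⟩ := h
  refine ⟨hf.ne huv, ?_, ?_, (disjoint_image hf).2 hAB, by rwa [card_image_of_injective _ hf],
    by rwa [card_image_of_injective _ hf]⟩ <;>
    simpa only [← image_union, hf.mem_finset_image]

lemma doubleStar.isStarFrame :
    IsStarFrame a b (left : Fin (a + b + 2)) right (univ.image leftLeaf)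
      (univ.image rightLeaf) := by
  refine ⟨by simp [Fin.ext_iff], by simp [Fin.ext_iff], by simp [Fin.ext_iff],
    Finset.disjoint_left.2 fun x hA hB => ?_, ?_, ?_⟩
  · rw [mem_image_leftLeaf] at hA; rw [mem_image_rightLeaf] at hB; omega
  · rw [card_image_of_injective _ leftLeaf_injective, card_univ, Fintype.card_fin]
  · rw [card_image_of_injective _ rightLeaf_injective, card_univ, Fintype.card_fin]

noncomputable def frameOf (f : Fin (a + b + 2) → V) : V × V × Finset V × Finset V :=
  (f left, f right, (univ.image leftLeaf).image f, (univ.image rightLeaf).image f)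

lemma doubleStar_adj_iff_starAdj_frameOf {f : Fin (a + b + 2) → V} (hf : Function.Injective f)
    {p q : Fin (a + b + 2)} :
    (doubleStar a b).Adj p q ↔ starAdj (frameOf f).1 (frameOf f).2.1 (frameOf f).2.2.1
      (frameOf f).2.2.2 (f p) (f q) :=
  doubleStar_adj_iff.trans (starAdj_image hf).symm

lemma doubleStar.univ_eq :
    (univ : Finset (Fin (a + b + 2))) =
      insert left (insert right (univ.image leftLeaf ∪ univ.image rightLeaf)) := by
  ext x
  simp only [mem_univ, mem_insert, mem_union, mem_image_leftLeaf, mem_image_rightLeaf,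
    Fin.ext_iff, val_left, val_right, true_iff]
  omega

lemma range_eq_frameOf_verts (f : Fin (a + b + 2) → V) :
    Set.range f = ↑(insert (frameOf f).1 (insert (frameOf f).2.1
      ((frameOf f).2.2.1 ∪ (frameOf f).2.2.2))) := by
  rw [← Set.image_univ, ← coe_univ, ← coe_image, doubleStar.univ_eq]
  simp [frameOf, image_insert, image_union]

lemma IsStarFrame.exists_frameOf_eq {u v : V} {A B : Finset V} (h : IsStarFrame a b u v A B) :
    ∃ f : Fin (a + b + 2) → V, Function.Injective f ∧ frameOf f = (u, v, A, B) := by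
  obtain ⟨huv, hu, hv, hAB, hA, hB⟩ := h
  obtain ⟨eA, heA, rfl⟩ := exists_injective_image_univ_eq hA
  obtain ⟨eB, heB, rfl⟩ := exists_injective_image_univ_eq hB
  simp only [mem_union, mem_image, mem_univ, true_and, not_or, not_exists] at hu hv
  refine ⟨Fin.cons u (Fin.cons v (Fin.append eA eB)), ?_, ?_⟩
  · refine Fin.cons_injective_iff.2 ⟨?_, Fin.cons_injective_iff.2 ⟨?_,
      Fin.append_injective_iff.2 ⟨heA, heB, fun i j h => ?_⟩⟩⟩
    · simp only [Fin.range_cons, Set.mem_insert_iff, Set.mem_range, not_or, not_exists]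
      exact ⟨huv, Fin.addCases (fun i h => hu.1 i (by simpa using h))
        (fun j h => hu.2 j (by simpa using h))⟩
    · simp only [Set.mem_range, not_exists]
      exact Fin.addCases (fun i h => hv.1 i (by simpa using h))
        (fun j h => hv.2 j (by simpa using h))
    · exact Finset.disjoint_left.1 hAB (mem_image_of_mem eA (mem_univ i))
        (h ▸ mem_image_of_mem eB (mem_univ j))
  · simp [frameOf, image_image, Function.comp_def, leftLeaf, rightLeaf, left, right]

variable [Fintype V]

noncomputable def starFrames (G : SimpleGraph V) (a b : ℕ) :
    Finset (V × V × Finset V × Finset V) :=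
  univ.filter fun t => G.Adj t.1 t.2.1 ∧ t.2.2.1 ⊆ (G.neighborFinset t.1).erase t.2.1 ∧
    #t.2.2.1 = a ∧ t.2.2.2 ⊆ (G.neighborFinset t.2.1).erase t.1 ∧ #t.2.2.2 = b ∧
    Disjoint t.2.2.1 t.2.2.2

variable {G : SimpleGraph V} {u v : V} {A B : Finset V}

lemma mem_starFrames : (u, v, A, B) ∈ starFrames G a b ↔ G.Adj u v ∧
    A ⊆ (G.neighborFinset u).erase v ∧ #A = a ∧ B ⊆ (G.neighborFinset v).erase u ∧ #B = b ∧
      Disjoint A B := by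
  simp [starFrames]

lemma mem_starFrames_iff_isStarFrame : (u, v, A, B) ∈ starFrames G a b ↔
    IsStarFrame a b u v A B ∧ ∀ x y, starAdj u v A B x y → G.Adj x y := by
  simp only [mem_starFrames, IsStarFrame, subset_iff, mem_erase, mem_neighborFinset, mem_union]
  constructor
  · rintro ⟨huv, hA, rfl, hB, rfl, hAB⟩
    refine ⟨⟨huv.ne, ?_, ?_, hAB, rfl, rfl⟩, ?_⟩
    · rintro (h | h)
      · exact (hA h).2.ne rfl
      · exact (hB h).1 rfl
    · rintro (h | h)
      · exact (hA h).1 rfl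
      · exact (hB h).2.ne rfl
    · rintro x y (⟨rfl, rfl⟩ | ⟨rfl, rfl⟩ | ⟨rfl, hy⟩ | ⟨hx, rfl⟩ | ⟨rfl, hy⟩ | ⟨hx, rfl⟩)
      exacts [huv, huv.symm, (hA hy).2, (hA hx).2.symm, (hB hy).2, (hB hx).2.symm]
  · rintro ⟨⟨huv, hu, hv, hAB, rfl, rfl⟩, hadj⟩
    refine ⟨hadj _ _ (Or.inl ⟨rfl, rfl⟩), fun x hx => ⟨?_, ?_⟩, rfl,
      fun x hx => ⟨?_, ?_⟩, rfl, hAB⟩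
    · rintro rfl; exact hv (Or.inl hx)
    · exact hadj _ _ (Or.inr (Or.inr (Or.inl ⟨rfl, hx⟩)))
    · rintro rfl; exact hu (Or.inr hx)
    · exact hadj _ _ (Or.inr (Or.inr (Or.inr (Or.inr (Or.inl ⟨rfl, hx⟩)))))

lemma frameOf_mem_starFrames_iff {f : Fin (a + b + 2) → V} (hf : Function.Injective f) :
    frameOf f ∈ starFrames G a b ↔ ∀ p q, (doubleStar a b).Adj p q → G.Adj (f p) (f q) := by
  rw [frameOf, mem_starFrames_iff_isStarFrame]
  refine ⟨fun h p q hpq => h.2 _ _ ((doubleStar_adj_iff_starAdj_frameOf hf).1 hpq),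
    fun h => ⟨doubleStar.isStarFrame.image hf, fun x y hxy => ?_⟩⟩
  obtain ⟨p, rfl⟩ : x ∈ Set.range f := by rw [range_eq_frameOf_verts]; exact hxy.mem_verts
  obtain ⟨q, rfl⟩ : y ∈ Set.range f := by rw [range_eq_frameOf_verts]; exact hxy.symm.mem_verts
  exact h p q ((doubleStar_adj_iff_starAdj_frameOf hf).2 hxy)

lemma contains_doubleStar_iff : Contains (doubleStar a b) G ↔ (starFrames G a b).Nonempty := by
  constructor
  · rintro ⟨f, hf⟩
    exact ⟨frameOf f, (frameOf_mem_starFrames_iff hf).2 fun p q => f.map_adj⟩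
  · rintro ⟨⟨u, v, A, B⟩, ht⟩
    obtain ⟨f, hf, hft⟩ := (mem_starFrames_iff_isStarFrame.1 ht).1.exists_frameOf_eq
    rw [← hft] at ht
    exact ⟨⟨f, (frameOf_mem_starFrames_iff hf).1 ht _ _⟩, hf⟩

end StarFrames

section Copies

variable {V : Type*} {a b : ℕ} {u v : V} {A B : Finset V}

def starSubgraph (G : SimpleGraph V) (t : V × V × Finset V × Finset V) : G.Subgraph where
  verts := ↑(insert t.1 (insert t.2.1 (t.2.2.1 ∪ t.2.2.2)))
  Adj x y := starAdj t.1 t.2.1 t.2.2.1 t.2.2.2 x y ∧ G.Adj x y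
  adj_sub h := h.2
  edge_vert h := h.1.mem_verts
  symm := ⟨fun _ _ h => ⟨h.1.symm, h.2.symm⟩⟩

lemma starSubgraph_swap (G : SimpleGraph V) :
    starSubgraph G (v, u, B, A) = starSubgraph G (u, v, A, B) := by
  ext x
  · simp only [starSubgraph, coe_insert, coe_union, Set.mem_insert_iff, Set.mem_union, mem_coe]
    tauto
  · simp only [starSubgraph, starAdj]
    tauto

lemma toSubgraph_eq_starSubgraph {G : SimpleGraph V} (f : Copy (doubleStar a b) G) :
    f.toSubgraph = starSubgraph G (frameOf f) := by
  ext x y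
  · simp only [Subgraph.map_verts, Subgraph.verts_top, Set.image_univ]
    exact Set.ext_iff.1 (range_eq_frameOf_verts f) x
  · simp only [Subgraph.map_adj, Subgraph.top_adj, Relation.Map, starSubgraph]
    constructor
    · rintro ⟨p, q, hpq, rfl, rfl⟩
      exact ⟨(doubleStar_adj_iff_starAdj_frameOf f.injective).1 hpq, f.toHom.map_adj hpq⟩
    · rintro ⟨hxy, -⟩
      obtain ⟨p, rfl⟩ : x ∈ Set.range f := by rw [range_eq_frameOf_verts]; exact hxy.mem_verts
      obtain ⟨q, rfl⟩ : y ∈ Set.range f := by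
        rw [range_eq_frameOf_verts]; exact hxy.symm.mem_verts
      exact ⟨p, q, (doubleStar_adj_iff_starAdj_frameOf f.injective).2 hxy, rfl, rfl⟩

variable [Fintype V] {G : SimpleGraph V}

lemma copyCount_doubleStar_eq_ncard :
    _root_.copyCount (doubleStar a b) G = (starSubgraph G '' ↑(starFrames G a b)).ncard := by
  rw [_root_.copyCount, ← Copy.range_toSubgraph]
  congr 1
  ext S
  simp only [Set.mem_range, Set.mem_image, mem_coe]
  constructor
  · rintro ⟨f, rfl⟩
    exact ⟨frameOf f, (frameOf_mem_starFrames_iff f.injective).2 fun _ _ => f.toHom.map_adj,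
      (toSubgraph_eq_starSubgraph f).symm⟩
  · rintro ⟨⟨u, v, A, B⟩, ht, rfl⟩
    obtain ⟨f, hf, hft⟩ := (mem_starFrames_iff_isStarFrame.1 ht).1.exists_frameOf_eq
    rw [← hft] at ht ⊢
    exact ⟨⟨⟨f, (frameOf_mem_starFrames_iff hf).1 ht _ _⟩, hf⟩,
      toSubgraph_eq_starSubgraph _⟩

end Copies

section Fibers

variable {V : Type*} {a b : ℕ} {u v u' v' x : V} {A B A' B' : Finset V}

lemma IsStarFrame.starAdj_left_iff (h : IsStarFrame a b u v A B) :
    starAdj u v A B u x ↔ x = v ∨ x ∈ A := by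
  obtain ⟨huv, hu, -⟩ := h
  simp only [mem_union, not_or] at hu
  simp [starAdj, huv, hu.1, hu.2]

lemma IsStarFrame.starAdj_right_iff (h : IsStarFrame a b u v A B) :
    starAdj u v A B v x ↔ x = u ∨ x ∈ B := by
  obtain ⟨huv, -, hv, -⟩ := h
  simp only [mem_union, not_or] at hv
  simp [starAdj, huv.symm, hv.1, hv.2]

lemma IsStarFrame.exists_two_starAdj_iff (h : IsStarFrame a b u v A B) (ha : 0 < a)
    (hb : 0 < b) :
    (∃ y z, y ≠ z ∧ starAdj u v A B x y ∧ starAdj u v A B x z) ↔ x = u ∨ x = v := by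
  obtain ⟨huv, hu, hv, hAB, hA, hB⟩ := h
  simp only [mem_union, not_or] at hu hv
  constructor
  · rintro ⟨y, z, hyz, hy, hz⟩
    by_contra! hx
    simp only [starAdj, hx.1, hx.2, false_and, false_or] at hy hz
    rcases hy with ⟨hxA, rfl⟩ | ⟨hxB, rfl⟩ <;> rcases hz with ⟨hxA', rfl⟩ | ⟨hxB', rfl⟩
    exacts [hyz rfl, Finset.disjoint_left.1 hAB hxA hxB', Finset.disjoint_left.1 hAB hxA' hxB,
      hyz rfl]
  · rintro (rfl | rfl)
    · obtain ⟨w, hw⟩ := card_pos.1 (hA ▸ ha)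
      exact ⟨v, w, fun h => hv.1 (h ▸ hw), by simp [starAdj], by simp [starAdj, hw]⟩
    · obtain ⟨w, hw⟩ := card_pos.1 (hB ▸ hb)
      exact ⟨u, w, fun h => hu.2 (h ▸ hw), by simp [starAdj], by simp [starAdj, hw]⟩

lemma eq_of_forall_eq_or_mem_iff {w : V} {C C' : Finset V} (hC : w ∉ C) (hC' : w ∉ C')
    (h : ∀ x, x = w ∨ x ∈ C ↔ x = w ∨ x ∈ C') : C = C' := by
  ext x
  by_cases hx : x = w
  · subst hx; simp [hC, hC']
  · simpa [hx] using h x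

lemma IsStarFrame.eq_or_eq_swap (h : IsStarFrame a b u v A B)
    (h' : IsStarFrame a b u' v' A' B') (ha : 0 < a) (hb : 0 < b)
    (hS : ∀ x y, starAdj u' v' A' B' x y ↔ starAdj u v A B x y) :
    (u', v', A', B') = (u, v, A, B) ∨ (u', v', A', B') = (v, u, B, A) := by
  have hub : ∀ x, x = u' ∨ x = v' ↔ x = u ∨ x = v := fun x => by
    simp only [← h.exists_two_starAdj_iff ha hb, ← h'.exists_two_starAdj_iff ha hb, hS]
  have hvA := fun hx => h.2.2.1 (mem_union_left B hx)
  have huB := fun hx => h.2.1 (mem_union_right A hx)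
  have hvA' := fun hx => h'.2.2.1 (mem_union_left B' hx)
  have huB' := fun hx => h'.2.1 (mem_union_right A' hx)
  rcases (hub u').1 (Or.inl rfl) with rfl | rfl
  · obtain rfl : v' = v := ((hub v').1 (Or.inr rfl)).resolve_left h'.1.symm
    left
    rw [eq_of_forall_eq_or_mem_iff hvA' hvA fun x => by
        rw [← h.starAdj_left_iff, ← h'.starAdj_left_iff, hS],
      eq_of_forall_eq_or_mem_iff huB' huB fun x => by
        rw [← h.starAdj_right_iff, ← h'.starAdj_right_iff, hS]]
  · obtain rfl : v' = u := ((hub v').1 (Or.inr rfl)).resolve_right h'.1.symm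
    right
    rw [eq_of_forall_eq_or_mem_iff hvA' huB fun x => by
        rw [← h.starAdj_right_iff, ← h'.starAdj_left_iff, hS],
      eq_of_forall_eq_or_mem_iff huB' hvA fun x => by
        rw [← h.starAdj_left_iff, ← h'.starAdj_right_iff, hS]]

variable [Fintype V] {G : SimpleGraph V}

lemma swap_mem_starFrames (h : (u, v, A, B) ∈ starFrames G a b) :
    (v, u, B, A) ∈ starFrames G b a := by
  obtain ⟨hadj, hA, hca, hB, hcb, hd⟩ := mem_starFrames.1 h
  exact mem_starFrames.2 ⟨hadj.symm, hB, hcb, hA, hca, hd.symm⟩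

lemma starSubgraph_eq_iff (ha : 0 < a) (hb : 0 < b) (ht : (u, v, A, B) ∈ starFrames G a b)
    (ht' : (u', v', A', B') ∈ starFrames G a b) :
    starSubgraph G (u', v', A', B') = starSubgraph G (u, v, A, B) ↔
      (u', v', A', B') = (u, v, A, B) ∨ (u', v', A', B') = (v, u, B, A) := by
  rw [mem_starFrames_iff_isStarFrame] at ht ht'
  refine ⟨fun hS => ht.1.eq_or_eq_swap ht'.1 ha hb fun x y => ?_, ?_⟩
  · have := congrArg (fun S : G.Subgraph => S.Adj x y) hS
    simp only [starSubgraph, eq_iff_iff] at this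
    exact ⟨fun hxy => (this.1 ⟨hxy, ht'.2 x y hxy⟩).1,
      fun hxy => (this.2 ⟨hxy, ht.2 x y hxy⟩).1⟩
  · rintro (h | h) <;> rw [h]
    exact starSubgraph_swap G

lemma card_starSubgraph_fiber (ha : 0 < a) (hb : 0 < b) (ht : (u, v, A, B) ∈ starFrames G a b) :
    #{t ∈ starFrames G a b | starSubgraph G t = starSubgraph G (u, v, A, B)} =
      if a = b then 2 else 1 := by
  have hfib : {t ∈ starFrames G a b | starSubgraph G t = starSubgraph G (u, v, A, B)} =
      {t ∈ starFrames G a b | t = (u, v, A, B) ∨ t = (v, u, B, A)} :=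
    filter_congr fun ⟨u', v', A', B'⟩ ht' => starSubgraph_eq_iff ha hb ht ht'
  have hne : (u, v, A, B) ≠ (v, u, B, A) := fun h =>
    (mem_starFrames.1 ht).1.ne (congrArg Prod.fst h)
  rw [hfib, filter_or, filter_eq', filter_eq', if_pos ht]
  split_ifs with hswap hab hab
  · rw [singleton_union, card_pair hne]
  · exact absurd ((mem_starFrames.1 hswap).2.2.1.symm.trans (mem_starFrames.1 ht).2.2.2.2.1) hab
  · subst hab; exact absurd (swap_mem_starFrames ht) hswap
  · simp

lemma card_starFrames_eq_mul_copyCount (ha : 0 < a) (hb : 0 < b) :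
    #(starFrames G a b) = (if a = b then 2 else 1) * _root_.copyCount (doubleStar a b) G := by
  rw [copyCount_doubleStar_eq_ncard, ← coe_image, Set.ncard_coe_finset,
    card_eq_sum_card_image (starSubgraph G), sum_const_nat (m := if a = b then 2 else 1),
    mul_comm]
  intro S hS
  obtain ⟨⟨u, v, A, B⟩, ht, rfl⟩ := mem_image.1 hS
  exact card_starSubgraph_fiber ha hb ht

end Fibers

section Counting

variable {V : Type*} [Fintype V] {G : SimpleGraph V} {a b : ℕ} {u v : V}

noncomputable def leafChoices (G : SimpleGraph V) (a b : ℕ) (u v : V) :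
    Finset (Finset V × Finset V) :=
  {p ∈ ((G.neighborFinset u).erase v).powersetCard a ×ˢ
    ((G.neighborFinset v).erase u).powersetCard b | Disjoint p.1 p.2}

noncomputable def starWeight (G : SimpleGraph V) (a b : ℕ) (u v : V) : ℕ :=
  (G.degree u - 1).choose a * (G.degree v - 1).choose b

lemma card_starFrames_eq_sum :
    #(starFrames G a b) = ∑ u, ∑ v ∈ G.neighborFinset u, #(leafChoices G a b u v) := by
  have : starFrames G a b = univ.biUnion fun u => (G.neighborFinset u).biUnion fun v =>
      (leafChoices G a b u v).image fun p => (u, v, p.1, p.2) := by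
    ext ⟨u, v, A, B⟩
    simp [mem_starFrames, leafChoices, and_assoc]
  rw [this, card_biUnion]
  · refine sum_congr rfl fun u _ => ?_
    rw [card_biUnion]
    · exact sum_congr rfl fun v _ => card_image_of_injective _ fun p q h => by
        simpa [Prod.ext_iff] using h
    · intro v _ v' _ hvv'
      simp only [Function.onFun, Finset.disjoint_left, mem_image]
      rintro _ ⟨p, -, rfl⟩ ⟨q, -, h⟩
      exact hvv' (congrArg (fun t => t.2.1) h).symm
  · intro u _ u' _ huu'
    simp only [Function.onFun, Finset.disjoint_left, mem_biUnion, mem_image]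
    rintro _ ⟨v, -, p, -, rfl⟩ ⟨v', -, q, -, h⟩
    exact huu' (congrArg Prod.fst h).symm

lemma card_leafChoices_le (h : G.Adj u v) : #(leafChoices G a b u v) ≤ starWeight G a b u v := by
  refine (card_filter_le _ _).trans_eq ?_
  rw [card_product, card_powersetCard, card_powersetCard, card_erase_of_mem (by simpa using h),
    card_erase_of_mem (by simpa using h.symm), card_neighborFinset_eq_degree,
    card_neighborFinset_eq_degree, starWeight]

lemma card_leafChoices_of_disjoint (h : G.Adj u v)
    (hd : Disjoint (G.neighborFinset u) (G.neighborFinset v)) :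
    #(leafChoices G a b u v) = starWeight G a b u v := by
  refine le_antisymm (card_leafChoices_le h) ?_
  rw [leafChoices, filter_true_of_mem]
  · rw [card_product, card_powersetCard, card_powersetCard, card_erase_of_mem (by simpa using h),
      card_erase_of_mem (by simpa using h.symm), card_neighborFinset_eq_degree,
      card_neighborFinset_eq_degree, starWeight]
  · intro p hp
    simp only [mem_product, mem_powersetCard] at hp
    exact hd.mono (hp.1.1.trans (erase_subset _ _)) (hp.2.1.trans (erase_subset _ _))

lemma add_one_le_degree_of_mem_starFrames {A B : Finset V}
    (h : (u, v, A, B) ∈ starFrames G a b) : a + 1 ≤ G.degree u ∧ b + 1 ≤ G.degree v := by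
  obtain ⟨hadj, hA, rfl, hB, rfl, -⟩ := mem_starFrames.1 h
  rw [← card_neighborFinset_eq_degree, ← card_neighborFinset_eq_degree]
  constructor
  · rw [← card_insert_of_notMem fun hv => (mem_erase.1 (hA hv)).1 rfl]
    exact card_le_card (insert_subset ((mem_neighborFinset ..).2 hadj)
      (hA.trans (erase_subset _ _)))
  · rw [← card_insert_of_notMem fun hu => (mem_erase.1 (hB hu)).1 rfl]
    exact card_le_card (insert_subset ((mem_neighborFinset ..).2 hadj.symm)
      (hB.trans (erase_subset _ _)))

lemma card_starFrames_le :
    #(starFrames G a b) ≤ ∑ u, ∑ v ∈ G.neighborFinset u, starWeight G a b u v := by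
  rw [card_starFrames_eq_sum]
  exact sum_le_sum fun u _ => sum_le_sum fun v hv =>
    card_leafChoices_le ((mem_neighborFinset ..).1 hv)

end Counting

section CompleteBipartite

variable {α β : Type*} {a b : ℕ}

/-- The number of frames on an edge joining vertices of degrees `c` and `m`, over both
orientations, when the two neighbourhoods are disjoint. -/
def pairWeight (a b c m : ℕ) : ℕ :=
  (c - 1).choose a * (m - 1).choose b + (m - 1).choose a * (c - 1).choose b

lemma pairWeight_mono {a b c m m' : ℕ} (h : m ≤ m') :
    pairWeight a b c m ≤ pairWeight a b c m' := by
  unfold pairWeight; gcongr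

lemma completeBipartiteGraph_neighborFinset_inl [Fintype β] (i : α)
    [Fintype ((completeBipartiteGraph α β).neighborSet (.inl i))] :
    (completeBipartiteGraph α β).neighborFinset (Sum.inl i) = univ.map .inr := by
  ext (j | j) <;> simp

lemma completeBipartiteGraph_neighborFinset_inr [Fintype α] (j : β)
    [Fintype ((completeBipartiteGraph α β).neighborSet (.inr j))] :
    (completeBipartiteGraph α β).neighborFinset (Sum.inr j) = univ.map .inl := by
  ext (i | i) <;> simp

lemma completeBipartiteGraph_degree_inl [Fintype β] (i : α)
    [Fintype ((completeBipartiteGraph α β).neighborSet (.inl i))] :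
    (completeBipartiteGraph α β).degree (.inl i) = Fintype.card β := by
  rw [← card_neighborFinset_eq_degree, completeBipartiteGraph_neighborFinset_inl, card_map,
    card_univ]

lemma completeBipartiteGraph_degree_inr [Fintype α] (j : β)
    [Fintype ((completeBipartiteGraph α β).neighborSet (.inr j))] :
    (completeBipartiteGraph α β).degree (.inr j) = Fintype.card α := by
  rw [← card_neighborFinset_eq_degree, completeBipartiteGraph_neighborFinset_inr, card_map,
    card_univ]

variable [Fintype α] [Fintype β]

lemma card_starFrames_completeBipartiteGraph :
    #(starFrames (completeBipartiteGraph α β) a b) =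
      Fintype.card α * Fintype.card β * pairWeight a b (Fintype.card α) (Fintype.card β) := by
  have hdisj : Disjoint (univ.map (.inr : β ↪ α ⊕ β)) (univ.map .inl) :=
    Finset.disjoint_left.2 (by simp)
  have hlr (i : α) (j : β) : #(leafChoices (completeBipartiteGraph α β) a b (.inl i) (.inr j)) =
      (Fintype.card β - 1).choose a * (Fintype.card α - 1).choose b := by
    rw [card_leafChoices_of_disjoint (by simp), starWeight, completeBipartiteGraph_degree_inl,
      completeBipartiteGraph_degree_inr]
    rw [completeBipartiteGraph_neighborFinset_inl, completeBipartiteGraph_neighborFinset_inr]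
    exact hdisj
  have hrl (i : α) (j : β) : #(leafChoices (completeBipartiteGraph α β) a b (.inr j) (.inl i)) =
      (Fintype.card α - 1).choose a * (Fintype.card β - 1).choose b := by
    rw [card_leafChoices_of_disjoint (by simp), starWeight, completeBipartiteGraph_degree_inl,
      completeBipartiteGraph_degree_inr]
    rw [completeBipartiteGraph_neighborFinset_inl, completeBipartiteGraph_neighborFinset_inr]
    exact hdisj.symm
  rw [card_starFrames_eq_sum, Fintype.sum_sum_type]
  simp only [completeBipartiteGraph_neighborFinset_inl, completeBipartiteGraph_neighborFinset_inr,
    sum_map, Function.Embedding.inl_apply, Function.Embedding.inr_apply, hlr, hrl, sum_const,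
    card_univ, smul_eq_mul, pairWeight]
  ring

end CompleteBipartite

section FreeGraphs

variable {V : Type*} [Fintype V] {G : SimpleGraph V} {a b c d : ℕ} {u v : V}

lemma degree_le_of_adj_of_free (hfree : ¬ Contains (doubleStar c d) G) (h : G.Adj u v)
    (hv : c + d + 2 ≤ G.degree v) : G.degree u ≤ c := by
  by_contra! hu
  have hNu : c ≤ #((G.neighborFinset u).erase v) := by
    rw [card_erase_of_mem (by simpa using h), card_neighborFinset_eq_degree]; omega
  obtain ⟨C, hC, rfl⟩ := exists_subset_card_eq hNu
  have hNv : d ≤ #((G.neighborFinset v).erase u \ C) := by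
    have := le_card_sdiff C ((G.neighborFinset v).erase u)
    rw [card_erase_of_mem (by simpa using h.symm), card_neighborFinset_eq_degree] at this
    omega
  obtain ⟨D, hD, rfl⟩ := exists_subset_card_eq hNv
  exact hfree (contains_doubleStar_iff.2 ⟨(u, v, C, D), mem_starFrames.2
    ⟨h, hC, rfl, hD.trans sdiff_subset, rfl, disjoint_of_subset_right hD disjoint_sdiff⟩⟩)

lemma sum_sum_neighborFinset_comm {M : Type*} [AddCommMonoid M] {S : Finset V}
    (hS : ∀ v ∈ S, G.neighborFinset v ⊆ Sᶜ) (f : V → V → M) :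
    ∑ v ∈ S, ∑ u ∈ G.neighborFinset v, f v u = ∑ u ∈ Sᶜ, ∑ v ∈ G.neighborFinset u ∩ S, f v u := by
  refine sum_comm' fun v u => ?_
  simp only [mem_inter, mem_neighborFinset]
  exact ⟨fun h => ⟨⟨h.2.symm, h.1⟩, hS v h.1 ((mem_neighborFinset ..).2 h.2)⟩,
    fun h => ⟨h.1.2, h.1.1.symm⟩⟩

end FreeGraphs

section HighDegree

variable {V : Type*} [Fintype V] {G : SimpleGraph V} {a b c d : ℕ} {u v : V}

noncomputable def highDegreeVerts (G : SimpleGraph V) (k : ℕ) : Finset V :=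
  {v | k ≤ G.degree v}

lemma mem_highDegreeVerts {k : ℕ} : v ∈ highDegreeVerts G k ↔ k ≤ G.degree v := by
  simp [highDegreeVerts]

variable (hfree : ¬ Contains (doubleStar c d) G)
include hfree

lemma neighborFinset_subset_compl_highDegreeVerts (hv : v ∈ highDegreeVerts G (c + d + 2)) :
    G.neighborFinset v ⊆ (highDegreeVerts G (c + d + 2))ᶜ := fun u hu => by
  have := degree_le_of_adj_of_free hfree ((mem_neighborFinset ..).1 hu).symm
    (mem_highDegreeVerts.1 hv)
  rw [mem_compl, mem_highDegreeVerts]; omega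

lemma degree_le_card_compl_highDegreeVerts (hv : v ∈ highDegreeVerts G (c + d + 2)) :
    G.degree v ≤ #(highDegreeVerts G (c + d + 2))ᶜ := by
  rw [← card_neighborFinset_eq_degree]
  exact card_le_card (neighborFinset_subset_compl_highDegreeVerts hfree hv)

lemma card_neighborFinset_inter_highDegreeVerts_le (u : V) :
    #(G.neighborFinset u ∩ highDegreeVerts G (c + d + 2)) ≤ c := by
  obtain h | ⟨v, hv⟩ := (G.neighborFinset u ∩ highDegreeVerts G (c + d + 2)).eq_empty_or_nonempty
  · simp [h]
  · rw [mem_inter, mem_neighborFinset] at hv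
    exact (card_le_card inter_subset_left).trans <| (card_neighborFinset_eq_degree G u).trans_le <|
      degree_le_of_adj_of_free hfree hv.1 (mem_highDegreeVerts.1 hv.2)

/-- Both orientations of an edge between a low- and a high-degree vertex are charged to the
low-degree end. -/
lemma sum_starWeight_le_sum_compl_highDegreeVerts :
    ∑ u, ∑ v ∈ G.neighborFinset u, starWeight G a b u v ≤
      ∑ u ∈ (highDegreeVerts G (c + d + 2))ᶜ,
        (#(G.neighborFinset u ∩ highDegreeVerts G (c + d + 2)) *
            pairWeight a b c #(highDegreeVerts G (c + d + 2))ᶜ +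
          #(G.neighborFinset u \ highDegreeVerts G (c + d + 2)) *
            ((c + d + 2).choose a * (c + d + 2).choose b)) := by
  rw [← sum_compl_add_sum (highDegreeVerts G (c + d + 2)), sum_sum_neighborFinset_comm
    (fun v hv => neighborFinset_subset_compl_highDegreeVerts hfree hv), ← sum_add_distrib]
  refine sum_le_sum fun u hu => ?_
  rw [mem_compl, mem_highDegreeVerts, not_le] at hu
  rw [← sum_inter_add_sum_sdiff (G.neighborFinset u) (highDegreeVerts G (c + d + 2)),
    add_right_comm, ← sum_add_distrib]
  refine add_le_add (sum_le_card_nsmul _ _ _ fun v hv => ?_)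
    (sum_le_card_nsmul _ _ _ fun v hv => ?_)
  · rw [mem_inter, mem_neighborFinset] at hv
    have hu' := degree_le_of_adj_of_free hfree hv.1 (mem_highDegreeVerts.1 hv.2)
    have hv' := degree_le_card_compl_highDegreeVerts hfree hv.2
    unfold starWeight pairWeight
    gcongr
  · rw [mem_sdiff, mem_neighborFinset, mem_highDegreeVerts, not_le] at hv
    unfold starWeight
    gcongr <;> omega

lemma sum_card_neighborFinset_inter_highDegreeVerts :
    ∑ u ∈ (highDegreeVerts G (c + d + 2))ᶜ, #(G.neighborFinset u ∩ highDegreeVerts G (c + d + 2)) =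
      ∑ v ∈ highDegreeVerts G (c + d + 2), G.degree v := by
  have := sum_sum_neighborFinset_comm
    (fun v hv => neighborFinset_subset_compl_highDegreeVerts hfree hv) fun _ _ => 1
  simpa only [sum_const, smul_eq_mul, mul_one, card_neighborFinset_eq_degree] using this.symm

end HighDegree

section Extremal

variable {V : Type*} [Fintype V] {G : SimpleGraph V} {a b c d : ℕ}

lemma card_starFrames_le_of_le_card_highDegreeVerts (hfree : ¬ Contains (doubleStar c d) G)
    (hc : 0 < c) (hS : c ≤ #(highDegreeVerts G (c + d + 2)))
    (hP : ∀ m, Fintype.card V ≤ 2 * m →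
      (c + d + 2) * ((c + d + 2).choose a * (c + d + 2).choose b) ≤ pairWeight a b c m) :
    #(starFrames G a b) ≤
      c * (Fintype.card V - c) * pairWeight a b c (Fintype.card V - c) := by
  set S := highDegreeVerts G (c + d + 2)
  set κ := (c + d + 2).choose a * (c + d + 2).choose b
  have hcard : #Sᶜ + #S = Fintype.card V := card_compl_add_card S
  -- Double counting the edges between `S` and `Sᶜ` shows that `S` is the smaller side.
  have hbig : #S * (c + d + 2) ≤ #Sᶜ * c := calc
    #S * (c + d + 2) ≤ ∑ v ∈ S, G.degree v :=
      card_nsmul_le_sum _ _ _ fun v hv => mem_highDegreeVerts.1 hv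
    _ = ∑ u ∈ Sᶜ, #(G.neighborFinset u ∩ S) :=
      (sum_card_neighborFinset_inter_highDegreeVerts hfree).symm
    _ ≤ #Sᶜ * c := sum_le_card_nsmul _ _ _ fun u _ =>
      card_neighborFinset_inter_highDegreeVerts_le hfree u
  have hPS := hP #Sᶜ (by nlinarith)
  have hκ : κ ≤ pairWeight a b c #Sᶜ := le_trans (Nat.le_mul_of_pos_left _ (by omega)) hPS
  have hvertex : ∀ u ∈ Sᶜ, #(G.neighborFinset u ∩ S) * pairWeight a b c #Sᶜ +
      #(G.neighborFinset u \ S) * κ ≤ c * pairWeight a b c #Sᶜ := by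
    intro u hu
    rw [mem_compl, mem_highDegreeVerts, not_le] at hu
    have hsplit := card_inter_add_card_sdiff (G.neighborFinset u) S
    rw [card_neighborFinset_eq_degree] at hsplit
    obtain h0 | ⟨v, hv⟩ := (G.neighborFinset u ∩ S).eq_empty_or_nonempty
    · rw [h0, card_empty] at hsplit ⊢
      calc 0 * pairWeight a b c #Sᶜ + #(G.neighborFinset u \ S) * κ ≤ (c + d + 2) * κ := by
            rw [zero_mul, zero_add]; gcongr; omega
        _ ≤ c * pairWeight a b c #Sᶜ := hPS.trans (Nat.le_mul_of_pos_left _ hc)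
    · rw [mem_inter, mem_neighborFinset] at hv
      have hu' := degree_le_of_adj_of_free hfree hv.1 (mem_highDegreeVerts.1 hv.2)
      calc _ ≤ #(G.neighborFinset u ∩ S) * pairWeight a b c #Sᶜ +
            #(G.neighborFinset u \ S) * pairWeight a b c #Sᶜ := by gcongr
        _ = G.degree u * pairWeight a b c #Sᶜ := by rw [← add_mul, hsplit]
        _ ≤ c * pairWeight a b c #Sᶜ := by gcongr
  calc #(starFrames G a b) ≤ ∑ u, ∑ v ∈ G.neighborFinset u, starWeight G a b u v :=
        card_starFrames_le
    _ ≤ _ := sum_starWeight_le_sum_compl_highDegreeVerts hfree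
    _ ≤ #Sᶜ * (c * pairWeight a b c #Sᶜ) := sum_le_card_nsmul _ _ _ hvertex
    _ ≤ (Fintype.card V - c) * (c * pairWeight a b c (Fintype.card V - c)) := by
        have : #Sᶜ ≤ Fintype.card V - c := by omega
        gcongr
        exact pairWeight_mono this
    _ = c * (Fintype.card V - c) * pairWeight a b c (Fintype.card V - c) := by ring

lemma card_starFrames_le_of_card_highDegreeVerts_lt (hfree : ¬ Contains (doubleStar c d) G)
    (hS : #(highDegreeVerts G (c + d + 2)) < c)
    (hP : (c - 1) * (Fintype.card V * pairWeight a b c (Fintype.card V)) +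
      (c + d + 2) * ((c + d + 2).choose a * (c + d + 2).choose b) * Fintype.card V ≤
        c * ((Fintype.card V - c) * pairWeight a b c (Fintype.card V - c))) :
    #(starFrames G a b) ≤
      c * (Fintype.card V - c) * pairWeight a b c (Fintype.card V - c) := by
  set n := Fintype.card V
  set S := highDegreeVerts G (c + d + 2)
  set κ := (c + d + 2).choose a * (c + d + 2).choose b
  have hSc : #Sᶜ ≤ n := card_le_univ _
  have hvertex : ∀ u ∈ Sᶜ, #(G.neighborFinset u ∩ S) * pairWeight a b c #Sᶜ +
      #(G.neighborFinset u \ S) * κ ≤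
        #(G.neighborFinset u ∩ S) * pairWeight a b c n + (c + d + 2) * κ := by
    intro u hu
    rw [mem_compl, mem_highDegreeVerts, not_le] at hu
    have : #(G.neighborFinset u \ S) ≤ c + d + 2 :=
      (card_le_card sdiff_subset).trans ((card_neighborFinset_eq_degree G u).trans_le hu.le)
    gcongr
    exact pairWeight_mono hSc
  calc #(starFrames G a b) ≤ ∑ u, ∑ v ∈ G.neighborFinset u, starWeight G a b u v :=
        card_starFrames_le
    _ ≤ _ := sum_starWeight_le_sum_compl_highDegreeVerts hfree
    _ ≤ ∑ u ∈ Sᶜ, (#(G.neighborFinset u ∩ S) * pairWeight a b c n + (c + d + 2) * κ) :=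
        sum_le_sum hvertex
    _ = (∑ v ∈ S, G.degree v) * pairWeight a b c n + #Sᶜ * ((c + d + 2) * κ) := by
        rw [sum_add_distrib, ← sum_mul, sum_card_neighborFinset_inter_highDegreeVerts hfree,
          sum_const, smul_eq_mul]
    _ ≤ ((c - 1) * n) * pairWeight a b c n + n * ((c + d + 2) * κ) := by
        gcongr
        calc ∑ v ∈ S, G.degree v ≤ #S * n :=
              sum_le_card_nsmul _ _ _ fun v _ => (G.degree_lt_card_verts v).le
          _ ≤ (c - 1) * n := by gcongr; omega
    _ ≤ c * (n - c) * pairWeight a b c (n - c) := by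
        rw [mul_assoc c]; linarith

end Extremal

section Binomial

open Filter

lemma add_one_sub_le_choose {k : ℕ} (hk : 1 ≤ k) (m : ℕ) : m + 1 - k ≤ m.choose k := by
  induction m generalizing k with
  | zero => simp; omega
  | succ m ih =>
    obtain ⟨k, rfl⟩ := Nat.exists_eq_add_of_le' hk
    rcases k.eq_zero_or_pos with rfl | hk'
    · simp
    · rw [Nat.choose_succ_succ]
      have := ih hk'
      omega

lemma mul_choose_sub_one (m k : ℕ) : m * (m - 1).choose k = (k + 1) * m.choose (k + 1) := by
  cases m with
  | zero => simp
  | succ m => rw [Nat.add_sub_cancel, Nat.add_one_mul_choose_eq, mul_comm]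

lemma choose_le_choose_sub_add (n c k : ℕ) :
    n.choose (k + 1) ≤ (n - c).choose (k + 1) + c * (n - 1).choose k := by
  induction c with
  | zero => simp
  | succ c ih =>
    have step : (n - c).choose (k + 1) ≤ (n - (c + 1)).choose (k + 1) + (n - 1).choose k := by
      rcases Nat.eq_zero_or_pos (n - c) with h | h
      · simp [h]
      · obtain ⟨m, hm⟩ : ∃ m, n - c = m + 1 := ⟨n - c - 1, by omega⟩
        rw [hm, show n - (c + 1) = m by omega, Nat.choose_succ_succ, add_comm]
        gcongr
        omega
    rw [add_mul, one_mul]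
    omega

/-- `choose_le_choose_sub_add` gives `C(n - c, k + 1) ≥ (1 - c (k + 1) / n) C(n, k + 1)`, and
`C(n, k + 1)` grows faster than `n` as `k ≥ 1`. -/
lemma eventually_sub_one_mul_choose_add_le (c L k : ℕ) (hc : 0 < c) (hk : 1 ≤ k) :
    ∀ᶠ n in atTop, (c - 1) * n.choose (k + 1) + L * n ≤ c * (n - c).choose (k + 1) := by
  refine eventually_atTop.2 ⟨2 * c * c * (k + 1) + 2 * L * (k + 1) + k + 1, fun n hn => ?_⟩
  set X := n.choose (k + 1)
  set Y := (n - c).choose (k + 1)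
  have hA := choose_le_choose_sub_add n c k
  have hn1 : 2 * (c * c * (k + 1)) ≤ n := by
    rw [show 2 * (c * c * (k + 1)) = 2 * c * c * (k + 1) by ring]; omega
  have hn2 : 2 * L * (k + 1) ≤ n - 1 + 1 - k := by omega
  have hB := mul_choose_sub_one n k
  have hC := add_one_sub_le_choose hk (n - 1)
  have hXY : (2 * c - 1) * X ≤ 2 * c * Y := by
    refine Nat.le_of_mul_le_mul_left ?_ (show 0 < n by omega)
    have h1 : n * X ≤ n * Y + c * ((k + 1) * X) := by
      rw [← hB]; nlinarith
    have h2 : 2 * (c * c * (k + 1)) * X ≤ n * X := by gcongr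
    zify [show 1 ≤ 2 * c by omega] at h1 h2 ⊢
    nlinarith
  have hX : 2 * L * n ≤ X := by
    refine Nat.le_of_mul_le_mul_left ?_ (show 0 < k + 1 by omega)
    rw [← hB]
    calc (k + 1) * (2 * L * n) = n * (2 * L * (k + 1)) := by ring
      _ ≤ n * (n - 1).choose k := by gcongr; exact hn2.trans hC
  zify [show 1 ≤ 2 * c by omega, show 1 ≤ c by omega] at hXY hX ⊢
  nlinarith

variable {a b c : ℕ}

lemma eventually_le_pairWeight (hac : a < c) (hb : 0 < b) (L : ℕ) :
    ∀ᶠ m in atTop, L ≤ pairWeight a b c m := by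
  refine eventually_atTop.2 ⟨L + b + 1, fun m hm => ?_⟩
  have h1 : 1 ≤ (c - 1).choose a := Nat.choose_pos (by omega)
  have h2 := add_one_sub_le_choose hb (m - 1)
  calc L ≤ (m - 1).choose b := by omega
    _ ≤ (c - 1).choose a * (m - 1).choose b := Nat.le_mul_of_pos_left _ h1
    _ ≤ pairWeight a b c m := Nat.le_add_right _ _

lemma eventually_sub_one_mul_pairWeight_add_le (ha : 0 < a) (hb : 0 < b) (hac : a < c)
    (L : ℕ) : ∀ᶠ n in atTop, (c - 1) * (n * pairWeight a b c n) + L * n ≤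
      c * ((n - c) * pairWeight a b c (n - c)) := by
  filter_upwards [eventually_sub_one_mul_choose_add_le c L b (by omega) hb,
    eventually_sub_one_mul_choose_add_le c 0 a (by omega) ha] with n hnb hna
  have h1 : 1 ≤ (c - 1).choose a * (b + 1) := Nat.mul_pos (Nat.choose_pos (by omega)) (by omega)
  have key : ∀ m, m * pairWeight a b c m = (c - 1).choose a * (b + 1) * m.choose (b + 1) +
      (c - 1).choose b * (a + 1) * m.choose (a + 1) := fun m => by
    unfold pairWeight
    linear_combination (c - 1).choose a * mul_choose_sub_one m b +
      (c - 1).choose b * mul_choose_sub_one m a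
  rw [key, key]
  have e1 := Nat.mul_le_mul_left ((c - 1).choose a * (b + 1)) hnb
  have e2 := Nat.mul_le_mul_left ((c - 1).choose b * (a + 1)) hna
  have e3 : L * n ≤ (c - 1).choose a * (b + 1) * (L * n) := Nat.le_mul_of_pos_left _ h1
  nlinarith

end Binomial

section Transport

variable {α β γ : Type*} {H : SimpleGraph α} {G : SimpleGraph β} {G' : SimpleGraph γ}

lemma Contains.of_iso (e : G ≃g G') (h : Contains H G) : Contains H G' := by
  obtain ⟨f, hf⟩ := h
  exact ⟨e.toHom.comp f, e.injective.comp hf⟩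

lemma copyCount_le_of_iso [Finite γ] (e : G ≃g G') :
    _root_.copyCount H G ≤ _root_.copyCount H G' := by
  refine Set.ncard_le_ncard_of_injOn (fun S => S.map e.toCopy.toHom)
    (fun S ⟨i⟩ => ⟨i.trans (e.toCopy.isoSubgraphMap S)⟩) (fun S _ T _ hST => ?_) (Set.toFinite _)
  ext x y
  · simpa using Set.ext_iff.1 (congrArg Subgraph.verts hST) (e x)
  · simpa [Relation.Map] using congrArg (fun S : G'.Subgraph => S.Adj (e x) (e y)) hST

lemma copyCount_congr [Finite β] [Finite γ] (e : G ≃g G') :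
    _root_.copyCount H G = _root_.copyCount H G' :=
  (copyCount_le_of_iso e).antisymm (copyCount_le_of_iso e.symm)

end Transport

section Main

variable {a b c d : ℕ}

lemma completeBipartiteGraph_not_contains_doubleStar {α β : Type*} [Fintype α] [Fintype β]
    (hα : Fintype.card α ≤ c) (hcd : c ≤ d) :
    ¬ Contains (doubleStar c d) (completeBipartiteGraph α β) := by
  rw [contains_doubleStar_iff]
  rintro ⟨⟨u, v, C, D⟩, ht⟩
  have hadj := (mem_starFrames.1 ht).1
  have hdeg := add_one_le_degree_of_mem_starFrames ht
  rcases u with i | j <;> rcases v with i' | j' <;> simp at hadj <;>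
    simp only [completeBipartiteGraph_degree_inr] at hdeg <;> omega

lemma copyCount_doubleStar_le_completeBipartiteGraph {V : Type*} [Fintype V] {G : SimpleGraph V}
    (hfree : ¬ Contains (doubleStar c d) G) (ha : 0 < a) (hb : 0 < b) (hc : 0 < c)
    (hP : ∀ m, Fintype.card V ≤ 2 * m →
      (c + d + 2) * ((c + d + 2).choose a * (c + d + 2).choose b) ≤ pairWeight a b c m)
    (hP' : (c - 1) * (Fintype.card V * pairWeight a b c (Fintype.card V)) +
      (c + d + 2) * ((c + d + 2).choose a * (c + d + 2).choose b) * Fintype.card V ≤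
        c * ((Fintype.card V - c) * pairWeight a b c (Fintype.card V - c))) :
    _root_.copyCount (doubleStar a b) G ≤ _root_.copyCount (doubleStar a b)
      (completeBipartiteGraph (Fin c) (Fin (Fintype.card V - c))) := by
  refine Nat.le_of_mul_le_mul_left ?_ (show 0 < if a = b then 2 else 1 by split_ifs <;> omega)
  rw [← card_starFrames_eq_mul_copyCount ha hb, ← card_starFrames_eq_mul_copyCount ha hb,
    card_starFrames_completeBipartiteGraph, Fintype.card_fin, Fintype.card_fin]
  rcases le_or_gt c #(highDegreeVerts G (c + d + 2)) with hS | hS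
  · exact card_starFrames_le_of_le_card_highDegreeVerts hfree hc hS hP
  · exact card_starFrames_le_of_card_highDegreeVerts_lt hfree hS hP'

end Main

/-- for `a ≤ b`, `a < c ≤ d` and large `n`,
`ex(n, S_{a,b}, S_{c,d}) = N(S_{a,b}, K_{c,n-c})`. -/
theorem exGen_doubleStar_doubleStar_eq_completeBipartite (a b c d : ℕ)
    (ha : 0 < a) (hab : a ≤ b) (hac : a < c) (hcd : c ≤ d) :
    ∃ n₀ : ℕ, ∀ n ≥ n₀,
      exGen n (doubleStar a b) (doubleStar c d) =
        _root_.copyCount (doubleStar a b) (completeBipartiteGraph (Fin c) (Fin (n - c))) := by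
  have hb : 0 < b := ha.trans_le hab
  set L := (c + d + 2) * ((c + d + 2).choose a * (c + d + 2).choose b)
  obtain ⟨N₁, hN₁⟩ := Filter.eventually_atTop.1 (eventually_le_pairWeight hac hb L)
  obtain ⟨N₂, hN₂⟩ := Filter.eventually_atTop.1
    (eventually_sub_one_mul_pairWeight_add_le ha hb hac L)
  refine ⟨2 * N₁ + N₂ + c, fun n hn => ?_⟩
  let e : Fin c ⊕ Fin (n - c) ≃ Fin n := finSumFinEquiv.trans (finCongr (by omega))
  let K := completeBipartiteGraph (Fin c) (Fin (n - c))
  have hK : ¬ Contains (doubleStar c d) K :=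
    completeBipartiteGraph_not_contains_doubleStar (by simp) hcd
  refine IsGreatest.csSup_eq ⟨⟨K.map e, fun h => hK (h.of_iso (Iso.map e K).symm),
    copyCount_congr (Iso.map e K)⟩, ?_⟩
  rintro _ ⟨G, hG, rfl⟩
  have := copyCount_doubleStar_le_completeBipartiteGraph hG ha hb (by omega)
    (fun m hm => hN₁ m (by simp at hm; omega)) (by simpa using hN₂ n (by omega))
  rwa [Fintype.card_fin] at this
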